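/- For the operators on smooth functions of (a, v, ξ) given by w¹⁰ = −θe^{−a}(sinh(θξ)∂_w + (i/θ)ω⁰(v,w)cosh(θξ)) and w⁰¹ = −θe^{−ξ}(i sinh(θa)ω⁰(v,w) − (1/θ)cosh(θa)∂_w), one has [w¹⁰_u, w¹⁰_{u'}] = −θ²ω⁰(u,u')·E⁰, where E⁰ is the multiplication operator by −(i/θ)sinh(2θξ)e^{−2a}. -/

import Mathlib

noncomputable section

/-- `V n` : the symplectic vector space `ℝ^{2n}` presented as pairs of `n`-vectors. -/
abbrev V (n : ℕ) := (Fin n → ℝ) × (Fin n → ℝ)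

/-- The standard symplectic bilinear form `ω⁰` on `ℝ^{2n}`. -/
def omega0 {n : ℕ} (x y : V n) : ℝ := ∑ i, (x.1 i * y.2 i - x.2 i * y.1 i)

/-- The space `S = ℝ × ℝ^{2n} × ℝ` with coordinates `(a, x, z)`. -/
abbrev S (n : ℕ) := ℝ × V n × ℝ

/-- The operator `w¹⁰_u f = −θe^{−a}(sinh(θξ)∂_u f + (i/θ)ω⁰(v,u)cosh(θξ)f)` on
functions of `(a,v,ξ) ∈ ℝ × ℝ^{2n} × ℝ`. -/
def w10 {n : ℕ} (θ : ℝ) (u : V n) (f : S n → ℂ) (p : S n) : ℂ :=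
  -(θ : ℂ) * Complex.exp (-(p.1 : ℂ)) *
    ((Real.sinh (θ * p.2.2) : ℂ) * fderiv ℝ f p (0, u, 0)
      + (Complex.I / θ) * (omega0 p.2.1 u : ℂ) * (Real.cosh (θ * p.2.2) : ℂ) * f p)

/-- The multiplication operator `E⁰ f = −(i/θ) sinh(2θξ) e^{−2a}·f`. -/
def E0op {n : ℕ} (θ : ℝ) (f : S n → ℂ) (p : S n) : ℂ :=
  -(Complex.I / θ) * (Real.sinh (2 * θ * p.2.2) : ℂ) * Complex.exp (-2 * (p.1 : ℂ)) * f p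

namespace W10Aux

/-- first coordinate projection as a CLM -/
def pa (n : ℕ) : S n →L[ℝ] ℝ := ContinuousLinearMap.fst ℝ ℝ (V n × ℝ)

/-- last coordinate projection as a CLM -/
def pxi (n : ℕ) : S n →L[ℝ] ℝ :=
  (ContinuousLinearMap.snd ℝ (V n) ℝ).comp (ContinuousLinearMap.snd ℝ ℝ (V n × ℝ))

/-- `q ↦ ω⁰(q.2.1, u)` as a continuous linear map. -/
def omegaCLM (n : ℕ) (u : V n) : S n →L[ℝ] ℝ :=
  LinearMap.toContinuousLinearMap
    { toFun := fun q => omega0 q.2.1 u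
      map_add' := by
        intro x y
        simp only [omega0, Prod.snd_add, Prod.fst_add, Pi.add_apply]
        rw [← Finset.sum_add_distrib]
        exact Finset.sum_congr rfl fun i _ => by ring
      map_smul' := by
        intro c x
        simp only [omega0, Prod.smul_snd, Prod.smul_fst, Pi.smul_apply, smul_eq_mul,
          RingHom.id_apply, Finset.mul_sum]
        exact Finset.sum_congr rfl fun i _ => by ring }

lemma omega0_antisymm {n : ℕ} (x y : V n) : omega0 y x = -omega0 x y := by
  simp only [omega0, ← Finset.sum_neg_distrib]
  exact Finset.sum_congr rfl fun i _ => by ring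

lemma fderiv_w10_apply {n : ℕ} (θ : ℝ) (u' : V n) (f : S n → ℂ) (hf : ContDiff ℝ (⊤ : ℕ∞) f)
    (p : S n) (u : V n) :
    fderiv ℝ (w10 θ u' f) p ((0 : ℝ), u, (0 : ℝ)) =
      -(θ : ℂ) * Complex.exp (-(p.1 : ℂ)) *
        ((Real.sinh (θ * p.2.2) : ℂ)
            * fderiv ℝ (fderiv ℝ f) p ((0 : ℝ), u, (0 : ℝ)) ((0 : ℝ), u', (0 : ℝ))
          + (Complex.I / θ) * (omega0 u u' : ℂ) * (Real.cosh (θ * p.2.2) : ℂ) * f p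
          + (Complex.I / θ) * (omega0 p.2.1 u' : ℂ) * (Real.cosh (θ * p.2.2) : ℂ)
              * fderiv ℝ f p ((0 : ℝ), u, (0 : ℝ))) := by
  have hf' : ContDiff ℝ (⊤ : ℕ∞) f := hf.of_le (by simp)
  have hdf := contDiff_infty_iff_fderiv.mp hf'
  -- second derivative
  have hF : HasFDerivAt (fderiv ℝ f) (fderiv ℝ (fderiv ℝ f) p) p :=
    (hdf.2.differentiable (by simp) p).hasFDerivAt
  have h2 : HasFDerivAt (fun q : S n => fderiv ℝ f q ((0 : ℝ), u', (0 : ℝ)))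
      ((ContinuousLinearMap.apply ℝ ℂ ((0 : ℝ), u', (0 : ℝ))).comp
        (fderiv ℝ (fderiv ℝ f) p)) p :=
    (ContinuousLinearMap.apply ℝ ℂ ((0 : ℝ), u', (0 : ℝ))).hasFDerivAt.comp p hF
  -- prefactor
  have h1 : HasFDerivAt (fun q : S n => ((q.1 : ℝ) : ℂ))
      (Complex.ofRealCLM.comp (pa n)) p :=
    Complex.ofRealCLM.hasFDerivAt.comp p (pa n).hasFDerivAt
  have hpre : HasFDerivAt (fun q : S n => -(θ : ℂ) * Complex.exp (-(q.1 : ℂ)))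
      ((-(θ : ℂ)) • (Complex.exp (-(p.1 : ℂ)) • (-(Complex.ofRealCLM.comp (pa n))))) p :=
    (h1.neg.cexp).const_mul (-(θ : ℂ))
  -- sinh and cosh factors
  have hξ : HasFDerivAt (fun q : S n => θ * q.2.2) (θ • pxi n) p :=
    (pxi n).hasFDerivAt.const_mul θ
  have hsC : HasFDerivAt (fun q : S n => ((Real.sinh (θ * q.2.2) : ℝ) : ℂ))
      (Complex.ofRealCLM.comp (Real.cosh (θ * p.2.2) • (θ • pxi n))) p :=
    Complex.ofRealCLM.hasFDerivAt.comp p hξ.sinh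
  have hcC : HasFDerivAt (fun q : S n => ((Real.cosh (θ * q.2.2) : ℝ) : ℂ))
      (Complex.ofRealCLM.comp (Real.sinh (θ * p.2.2) • (θ • pxi n))) p :=
    Complex.ofRealCLM.hasFDerivAt.comp p hξ.cosh
  -- symplectic factor
  have hω : HasFDerivAt (fun q : S n => ((omega0 q.2.1 u' : ℝ) : ℂ))
      (Complex.ofRealCLM.comp (omegaCLM n u')) p :=
    Complex.ofRealCLM.hasFDerivAt.comp p (omegaCLM n u').hasFDerivAt
  have hfp : HasFDerivAt f (fderiv ℝ f p) p := (hdf.1 p).hasFDerivAt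
  have hw := hpre.mul ((hsC.mul h2).add (((hω.const_mul (Complex.I / θ)).mul hcC).mul hfp))
  have e : fderiv ℝ (w10 θ u' f) p = _ := hw.fderiv
  rw [e]
  simp only [ContinuousLinearMap.add_apply, ContinuousLinearMap.smul_apply,
    ContinuousLinearMap.comp_apply, ContinuousLinearMap.neg_apply,
    ContinuousLinearMap.apply_apply, Complex.ofRealCLM_apply, pa, pxi, omegaCLM,
    ContinuousLinearMap.coe_fst', ContinuousLinearMap.coe_snd',
    LinearMap.coe_toContinuousLinearMap', LinearMap.coe_mk, AddHom.coe_mk,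
    smul_eq_mul, Pi.mul_apply]
  push_cast
  ring

end W10Aux

open W10Aux in
/-- the commutator identity `[w¹⁰_u, w¹⁰_{u'}] = −θ²ω⁰(u,u')E⁰` on
smooth functions. -/
theorem w10_commutator (n : ℕ) (θ : ℝ) (hθ : θ ≠ 0) (u u' : V n)
    (f : S n → ℂ) (hf : ContDiff ℝ (⊤ : ℕ∞) f) :
    ∀ p : S n, w10 θ u (w10 θ u' f) p - w10 θ u' (w10 θ u f) p
      = -(θ : ℂ) ^ 2 * (omega0 u u' : ℂ) * E0op θ f p := by
  intro p
  have hθC : (θ : ℂ) ≠ 0 := Complex.ofReal_ne_zero.mpr hθ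
  have key1 := fderiv_w10_apply θ u' f hf p u
  have key2 := fderiv_w10_apply θ u f hf p u'
  have hsym : fderiv ℝ (fderiv ℝ f) p ((0 : ℝ), u, (0 : ℝ)) ((0 : ℝ), u', (0 : ℝ))
      = fderiv ℝ (fderiv ℝ f) p ((0 : ℝ), u', (0 : ℝ)) ((0 : ℝ), u, (0 : ℝ)) :=
    (hf.contDiffAt.isSymmSndFDerivAt (by rw [minSmoothness_of_isRCLikeNormedField]; exact WithTop.coe_le_coe.mpr (le_top : (2 : ℕ∞) ≤ ⊤))).eq _ _
  have hanti : (omega0 u' u : ℂ) = -(omega0 u u' : ℂ) := by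
    rw [omega0_antisymm u u']; push_cast; ring
  have h2s : ((Real.sinh (2 * θ * p.2.2) : ℝ) : ℂ)
      = 2 * (Real.sinh (θ * p.2.2) : ℂ) * (Real.cosh (θ * p.2.2) : ℂ) := by
    rw [show 2 * θ * p.2.2 = 2 * (θ * p.2.2) by ring, Real.sinh_two_mul]
    push_cast; ring
  have hexp : Complex.exp (-2 * (p.1 : ℂ))
      = Complex.exp (-(p.1 : ℂ)) * Complex.exp (-(p.1 : ℂ)) := by
    rw [← Complex.exp_add]; ring_nf
  simp only [w10, E0op]
  rw [key1, key2, hsym, hanti, h2s, hexp]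
  field_simp
  ring
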